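/- Fix integers n ≥ 1 and N ≥ 2, let σ be the uniform (normalized surface) probability measure on 𝕊^n ⊂ ℝ^{n+1}, let μ₀ be a Borel probability measure on 𝕊^n absolutely continuous with respect to σ, and let μ := μ₀^{⊗N} on (𝕊^n)^N. Then for every measurable φ : [0,π] → ℝ with ‖φ‖²_{L²(ρ)} := (1/(N(N−1))) Σ_{i ≠ j} ∫ φ(d(x_i,x_j))² d(x_i,x_j)² dμ(X) < ∞, one has ‖f_φ‖²_{L²(μ)} ≥ ((N−1)/N²) ‖φ‖²_{L²(ρ)}. -/

import Mathlib

open MeasureTheory Finset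
open scoped ENNReal RealInnerProductSpace

/-- Geodesic distance on the unit sphere: `d(x,y) = arccos⟨x,y⟩`. -/
noncomputable def sphereDist {n : ℕ} (x y : EuclideanSpace ℝ (Fin (n + 1))) : ℝ :=
  Real.arccos ⟪x, y⟫

open Classical in
/-- The influence vector on the unit sphere:
`w(x,y) = d(x,y)·(y − ⟨x,y⟩x)/‖y − ⟨x,y⟩x‖` if `y ≠ ±x`, and `0` otherwise. -/
noncomputable def sphereW {n : ℕ} (x y : EuclideanSpace ℝ (Fin (n + 1))) :
    EuclideanSpace ℝ (Fin (n + 1)) :=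
  if y = x ∨ y = -x then 0
  else sphereDist x y • (‖y - ⟪x, y⟫ • x‖⁻¹ • (y - ⟪x, y⟫ • x))

/-- The interaction velocity field on the sphere:
`f_φ(X)_i = (1/N) ∑_{j ≠ i} φ(d(x_i,x_j)) w(x_i,x_j)`. -/
noncomputable def sphereField (n N : ℕ) (φ : ℝ → ℝ)
    (X : Fin N → EuclideanSpace ℝ (Fin (n + 1))) (i : Fin N) :
    EuclideanSpace ℝ (Fin (n + 1)) :=
  (N : ℝ)⁻¹ • ∑ j ∈ Finset.univ.erase i, φ (sphereDist (X i) (X j)) • sphereW (X i) (X j)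

/-- The squared `L²(ρ)` norm on the sphere:
`‖φ‖²_{L²(ρ)} = (1/(N(N−1))) ∑_{i≠j} ∫ φ(d(x_i,x_j))² d(x_i,x_j)² dμ(X)`. -/
noncomputable def sphereRhoSqNorm (n N : ℕ)
    (μ : Measure (Fin N → EuclideanSpace ℝ (Fin (n + 1)))) (φ : ℝ → ℝ) : ℝ≥0∞ :=
  ((N * (N - 1) : ℕ) : ℝ≥0∞)⁻¹ *
    ∑ i : Fin N, ∑ j ∈ Finset.univ.erase i,
      ∫⁻ X, ENNReal.ofReal
        ((φ (sphereDist (X i) (X j))) ^ 2 * (sphereDist (X i) (X j)) ^ 2) ∂μ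

/-- The squared `L²(μ)` norm of the interaction field on the sphere. -/
noncomputable def sphereFieldSqNorm (n N : ℕ)
    (μ : Measure (Fin N → EuclideanSpace ℝ (Fin (n + 1)))) (φ : ℝ → ℝ) : ℝ≥0∞ :=
  ∫⁻ X, ENNReal.ofReal ((N : ℝ)⁻¹ * ∑ i : Fin N, ‖sphereField n N φ X i‖ ^ 2) ∂μ

/-
Write `G(x,y) = φ(d(x,y)) w(x,y)`, so that `f_φ(X)_i = N⁻¹ ∑_{j ≠ i} G(x_i,x_j)`. Expanding
`‖∑_{j ≠ i} G(x_i,x_j)‖²` gives `N - 1` diagonal terms, each with expectation `E‖G‖²`, and cross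
terms `E⟪G(x_i,x_j), G(x_i,x_k)⟫` with `i, j, k` distinct. By independence and Fubini a cross term
equals `∫ ‖∫ G(x,y) dμ₀(y)‖² dμ₀(x) ≥ 0`, hence `‖f_φ‖² ≥ (N-1)/N² · E‖G‖²`. Finally
`‖w(x,y)‖ = d(x,y)` except at antipodal pairs `y = -x`, where `w` vanishes but `d = π`; these pairs
are `μ₀ ⊗ μ₀`-null because rotation invariance leaves `σ`, hence `μ₀`, without atoms. So
`E‖G‖² = ‖φ‖²_{L²(ρ)}`.
-/

open ProbabilityTheory

theorem MeasureTheory.MeasurePreserving.integral_comp_of_aestronglyMeasurable {α β G : Type*}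
    [MeasurableSpace α] [MeasurableSpace β] [NormedAddCommGroup G] [NormedSpace ℝ G]
    {μ : Measure α} {ν : Measure β} {f : α → β} (hf : MeasurePreserving f μ ν) {g : β → G}
    (hg : AEStronglyMeasurable g ν) : ∫ x, g (f x) ∂μ = ∫ y, g y ∂ν := by
  rw [← hf.map_eq] at hg ⊢
  exact (integral_map hf.measurable.aemeasurable hg).symm

theorem ae_prod_snd_ne {α β : Type*} [MeasurableSpace α] [MeasurableSpace β] [MeasurableEq β]
    {μ : Measure α} {ν : Measure β} [SFinite ν] [NullSingletonClass ν] {f : α → β}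
    (hf : Measurable f) : ∀ᵐ p ∂(μ.prod ν), p.2 ≠ f p.1 := by
  have hgraph : MeasurableSet {p : α × β | p.2 = f p.1} :=
    measurableSet_eq_fun measurable_snd (hf.comp measurable_fst)
  simp only [ae_iff, ne_eq, not_not]
  rw [Measure.prod_apply hgraph]
  simp [Set.preimage, measure_singleton]

theorem le_lintegral_ofReal_mean {Ω : Type*} [MeasurableSpace Ω] {μ : Measure Ω} {N : ℕ}
    [NeZero N] {f : Fin N → Ω → ℝ} (hf : ∀ i, AEMeasurable (f i) μ) (hf₀ : ∀ i ω, 0 ≤ f i ω)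
    {c : ℝ≥0∞} (hc : ∀ i, c ≤ ∫⁻ ω, ENNReal.ofReal (f i ω) ∂μ) :
    c ≤ ∫⁻ ω, ENNReal.ofReal ((N : ℝ)⁻¹ * ∑ i, f i ω) ∂μ := by
  have hN : (N : ℝ≥0∞) ≠ 0 := by simpa using NeZero.ne N
  calc c = (N : ℝ≥0∞)⁻¹ * ∑ _i : Fin N, c := by
        rw [sum_const, card_univ, Fintype.card_fin, nsmul_eq_mul, ← mul_assoc,
          ENNReal.inv_mul_cancel hN (ENNReal.natCast_ne_top N), one_mul]
    _ ≤ (N : ℝ≥0∞)⁻¹ * ∑ i, ∫⁻ ω, ENNReal.ofReal (f i ω) ∂μ := by gcongr with i; exact hc i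
    _ = ∫⁻ ω, ENNReal.ofReal ((N : ℝ)⁻¹ * ∑ i, f i ω) ∂μ := by
        rw [← lintegral_finsetSum' _ fun i _ => (hf i).ennreal_ofReal,
          ← lintegral_const_mul' _ _ (ENNReal.inv_ne_top.2 hN)]
        refine lintegral_congr fun ω => ?_
        rw [ENNReal.ofReal_mul (by positivity), ENNReal.ofReal_sum_of_nonneg fun i _ => hf₀ i ω,
          ENNReal.ofReal_inv_of_pos (by simpa using NeZero.pos N), ENNReal.ofReal_natCast]

theorem MeasureTheory.memLp_two_of_lintegral_ofReal_norm_sq_ne_top {Ω E : Type*}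
    [MeasurableSpace Ω] {μ : Measure Ω} [NormedAddCommGroup E] {f : Ω → E}
    (hf : AEStronglyMeasurable f μ) (h : ∫⁻ ω, ENNReal.ofReal (‖f ω‖ ^ 2) ∂μ ≠ ⊤) :
    MemLp f 2 μ :=
  (memLp_two_iff_integrable_sq_norm hf).2
    ⟨hf.norm.pow 2, (hasFiniteIntegral_iff_ofReal (ae_of_all _ fun _ => sq_nonneg _)).2 h.lt_top⟩

section Hilbert

variable {Ω E : Type*} [MeasurableSpace Ω] {μ : Measure Ω}
  [NormedAddCommGroup E] [InnerProductSpace ℝ E]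

theorem MeasureTheory.MemLp.integrable_inner {f g : Ω → E} (hf : MemLp f 2 μ)
    (hg : MemLp g 2 μ) : Integrable (fun ω => ⟪f ω, g ω⟫) μ :=
  (L2.integrable_inner (𝕜 := ℝ) hf.toLp hg.toLp).congr <| by
    filter_upwards [hf.coeFn_toLp, hg.coeFn_toLp] with ω hfω hgω
    rw [hfω, hgω]

theorem sum_integral_norm_sq_le_integral_norm_sum_sq {ι : Type*} (s : Finset ι)
    {g : ι → Ω → E} (hg : ∀ j ∈ s, MemLp (g j) 2 μ)
    (hcorr : ∀ j ∈ s, ∀ k ∈ s, j ≠ k → 0 ≤ ∫ ω, ⟪g j ω, g k ω⟫ ∂μ) :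
    ∑ j ∈ s, ∫ ω, ‖g j ω‖ ^ 2 ∂μ ≤ ∫ ω, ‖∑ j ∈ s, g j ω‖ ^ 2 ∂μ := by
  have hint : ∀ j ∈ s, ∀ k ∈ s, Integrable (fun ω => ⟪g j ω, g k ω⟫) μ :=
    fun j hj k hk => (hg j hj).integrable_inner (hg k hk)
  have hcorr' : ∀ j ∈ s, ∀ k ∈ s, 0 ≤ ∫ ω, ⟪g j ω, g k ω⟫ ∂μ := by
    intro j hj k hk
    rcases eq_or_ne j k with rfl | hjk
    · exact integral_nonneg fun ω => real_inner_self_nonneg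
    · exact hcorr j hj k hk hjk
  calc ∑ j ∈ s, ∫ ω, ‖g j ω‖ ^ 2 ∂μ = ∑ j ∈ s, ∫ ω, ⟪g j ω, g j ω⟫ ∂μ := by
        simp only [real_inner_self_eq_norm_sq]
    _ ≤ ∑ j ∈ s, ∑ k ∈ s, ∫ ω, ⟪g j ω, g k ω⟫ ∂μ :=
        sum_le_sum fun j hj => single_le_sum (fun k hk => hcorr' j hj k hk) hj
    _ = ∫ ω, ‖∑ j ∈ s, g j ω‖ ^ 2 ∂μ := by
        simp_rw [← real_inner_self_eq_norm_sq, sum_inner, inner_sum]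
        rw [integral_finsetSum _ fun j hj => integrable_finsetSum _ (hint j hj)]
        exact sum_congr rfl fun j hj => (integral_finsetSum _ (hint j hj)).symm

end Hilbert

section Prod

variable {α E : Type*} [MeasurableSpace α] [NormedAddCommGroup E] [InnerProductSpace ℝ E]

theorem integral_inner_prod_eq_norm_integral_sq [CompleteSpace E] {ν : Measure α} [SFinite ν]
    {g : α → E} (hg : Integrable g ν) :
    ∫ p, ⟪g p.1, g p.2⟫ ∂(ν.prod ν) = ‖∫ y, g y ∂ν‖ ^ 2 := by
  have hint : Integrable (fun p : α × α => ⟪g p.1, g p.2⟫) (ν.prod ν) :=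
    (hg.norm.mul_prod hg.norm).mono'
      ((hg.1.comp_quasiMeasurePreserving Measure.quasiMeasurePreserving_fst).inner
        (hg.1.comp_quasiMeasurePreserving Measure.quasiMeasurePreserving_snd))
      (.of_forall fun p => norm_inner_le_norm _ _)
  rw [integral_prod _ hint, ← real_inner_self_eq_norm_sq, ← integral_inner hg]
  refine integral_congr_ae (.of_forall fun y => ?_)
  show ∫ z, ⟪g y, g z⟫ ∂ν = ⟪∫ z, g z ∂ν, g y⟫
  rw [integral_inner hg, real_inner_comm]

variable {μ₀ : Measure α} [IsProbabilityMeasure μ₀] {G : α × α → E}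

theorem integrable_inner_comp_prod_prod (hG : MemLp G 2 (μ₀.prod μ₀)) :
    Integrable (fun p : α × α × α => ⟪G (p.1, p.2.1), G (p.1, p.2.2)⟫)
      (μ₀.prod (μ₀.prod μ₀)) :=
  MemLp.integrable_inner
    (hG.comp_measurePreserving ((MeasurePreserving.id μ₀).prod measurePreserving_fst))
    (hG.comp_measurePreserving ((MeasurePreserving.id μ₀).prod measurePreserving_snd))

theorem integral_inner_comp_prod_prod_nonneg [CompleteSpace E] (hG : MemLp G 2 (μ₀.prod μ₀)) :
    0 ≤ ∫ p, ⟪G (p.1, p.2.1), G (p.1, p.2.2)⟫ ∂(μ₀.prod (μ₀.prod μ₀)) := by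
  rw [integral_prod _ (integrable_inner_comp_prod_prod hG)]
  refine integral_nonneg_of_ae ?_
  filter_upwards [(hG.integrable one_le_two).prod_right_ae] with x hx
  rw [integral_inner_prod_eq_norm_integral_sq hx]
  positivity

end Prod

section IID

variable {α ι : Type*} [MeasurableSpace α] {μ₀ : Measure α} [IsProbabilityMeasure μ₀] [Fintype ι]

theorem iIndepFun_eval_pi : iIndepFun (fun i (X : ι → α) => X i) (Measure.pi fun _ => μ₀) :=
  iIndepFun_pi (X := fun _ => id) fun _ => aemeasurable_id

theorem measurePreserving_eval_prodMk_eval {i j : ι} (hij : i ≠ j) :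
    MeasurePreserving (fun X : ι → α => (X i, X j)) (Measure.pi fun _ => μ₀) (μ₀.prod μ₀) := by
  refine ⟨(measurable_pi_apply i).prodMk (measurable_pi_apply j), ?_⟩
  rw [(iIndepFun_eval_pi.indepFun hij).map_prod_eq_prod_map_map
    (measurable_pi_apply i).aemeasurable (measurable_pi_apply j).aemeasurable,
    (measurePreserving_eval _ i).map_eq, (measurePreserving_eval _ j).map_eq]

theorem measurePreserving_eval_prodMk_eval_prodMk_eval {i j k : ι} (hij : i ≠ j) (hik : i ≠ k)
    (hjk : j ≠ k) :
    MeasurePreserving (fun X : ι → α => (X i, X j, X k)) (Measure.pi fun _ => μ₀)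
      (μ₀.prod (μ₀.prod μ₀)) := by
  have hjk' := measurePreserving_eval_prodMk_eval (μ₀ := μ₀) hjk
  refine ⟨(measurable_pi_apply i).prodMk hjk'.measurable, ?_⟩
  rw [(iIndepFun_eval_pi.indepFun_prodMk (fun l => measurable_pi_apply l) j k i hij.symm
    hik.symm).symm.map_prod_eq_prod_map_map (measurable_pi_apply i).aemeasurable
    hjk'.measurable.aemeasurable, (measurePreserving_eval _ i).map_eq, hjk'.map_eq]

variable {E : Type*} [NormedAddCommGroup E] {G : α × α → E}

theorem memLp_sum_comp_eval_prodMk (hG : MemLp G 2 (μ₀.prod μ₀)) {i : ι} {s : Finset ι}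
    (hi : i ∉ s) :
    MemLp (fun X : ι → α => ∑ j ∈ s, G (X i, X j)) 2 (Measure.pi fun _ => μ₀) :=
  memLp_finsetSum s fun _ hj =>
    hG.comp_measurePreserving (measurePreserving_eval_prodMk_eval fun h => hi (h ▸ hj))

variable [InnerProductSpace ℝ E] [CompleteSpace E]

theorem card_mul_integral_norm_sq_le_integral_norm_sum_sq (hG : MemLp G 2 (μ₀.prod μ₀))
    {i : ι} {s : Finset ι} (hi : i ∉ s) :
    #s * ∫ p, ‖G p‖ ^ 2 ∂(μ₀.prod μ₀) ≤
      ∫ X, ‖∑ j ∈ s, G (X i, X j)‖ ^ 2 ∂(Measure.pi fun _ => μ₀) := by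
  have hne : ∀ j ∈ s, i ≠ j := fun j hj h => hi (h ▸ hj)
  have hpair : ∀ j ∈ s, MeasurePreserving (fun X : ι → α => (X i, X j))
      (Measure.pi fun _ => μ₀) (μ₀.prod μ₀) :=
    fun j hj => measurePreserving_eval_prodMk_eval (hne j hj)
  have hcorr : ∀ j ∈ s, ∀ k ∈ s, j ≠ k →
      0 ≤ ∫ X, ⟪G (X i, X j), G (X i, X k)⟫ ∂(Measure.pi fun _ => μ₀) := by
    intro j hj k hk hjk
    rw [(measurePreserving_eval_prodMk_eval_prodMk_eval (hne j hj) (hne k hk)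
      hjk).integral_comp_of_aestronglyMeasurable
      (integrable_inner_comp_prod_prod hG).aestronglyMeasurable]
    exact integral_inner_comp_prod_prod_nonneg hG
  calc #s * ∫ p, ‖G p‖ ^ 2 ∂(μ₀.prod μ₀)
      = ∑ j ∈ s, ∫ X, ‖G (X i, X j)‖ ^ 2 ∂(Measure.pi fun _ => μ₀) := by
        rw [sum_congr rfl fun j hj => (hpair j hj).integral_comp_of_aestronglyMeasurable
          (g := fun p => ‖G p‖ ^ 2) (hG.1.norm.pow 2), sum_const, nsmul_eq_mul]
    _ ≤ _ := sum_integral_norm_sq_le_integral_norm_sum_sq s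
        (fun j hj => hG.comp_measurePreserving (hpair j hj)) hcorr

theorem card_mul_lintegral_norm_sq_le_lintegral_norm_sum_sq (hG : MemLp G 2 (μ₀.prod μ₀))
    {i : ι} {s : Finset ι} (hi : i ∉ s) :
    #s * ∫⁻ p, ENNReal.ofReal (‖G p‖ ^ 2) ∂(μ₀.prod μ₀) ≤
      ∫⁻ X, ENNReal.ofReal (‖∑ j ∈ s, G (X i, X j)‖ ^ 2) ∂(Measure.pi fun _ => μ₀) := by
  rw [← ofReal_integral_eq_lintegral_ofReal (hG.integrable_norm_pow two_ne_zero)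
      (ae_of_all _ fun _ => sq_nonneg _),
    ← ofReal_integral_eq_lintegral_ofReal
      ((memLp_sum_comp_eval_prodMk hG hi).integrable_norm_pow two_ne_zero)
      (ae_of_all _ fun _ => sq_nonneg _),
    ← ENNReal.ofReal_natCast, ← ENNReal.ofReal_mul (Nat.cast_nonneg _)]
  exact ENNReal.ofReal_le_ofReal (card_mul_integral_norm_sq_le_integral_norm_sum_sq hG hi)

end IID

noncomputable def interactionField {α E : Type*} [AddCommMonoid E] [Module ℝ E] {N : ℕ}
    (G : α × α → E) (X : Fin N → α) (i : Fin N) : E :=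
  (N : ℝ)⁻¹ • ∑ j ∈ univ.erase i, G (X i, X j)

theorem le_lintegral_mean_norm_interactionField_sq {α E : Type*} [MeasurableSpace α]
    {μ₀ : Measure α} [IsProbabilityMeasure μ₀] [NormedAddCommGroup E] [InnerProductSpace ℝ E]
    [CompleteSpace E] {G : α × α → E} (hG : MemLp G 2 (μ₀.prod μ₀)) {N : ℕ} :
    ((N - 1 : ℕ) : ℝ≥0∞) / (N : ℝ≥0∞) ^ 2 * ∫⁻ p, ENNReal.ofReal (‖G p‖ ^ 2) ∂(μ₀.prod μ₀) ≤
      ∫⁻ X, ENNReal.ofReal ((N : ℝ)⁻¹ * ∑ i : Fin N, ‖interactionField G X i‖ ^ 2)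
        ∂(Measure.pi fun _ => μ₀) := by
  rcases N.eq_zero_or_pos with rfl | hN
  · simp
  have : NeZero N := ⟨hN.ne'⟩
  refine le_lintegral_ofReal_mean (fun i => ?_) (fun i X => sq_nonneg _) fun i => ?_
  · exact (((memLp_sum_comp_eval_prodMk hG (notMem_erase i univ)).const_smul
      (N : ℝ)⁻¹).1.norm.pow 2).aemeasurable
  have hscale : ∀ X : Fin N → α, ENNReal.ofReal (‖interactionField G X i‖ ^ 2) =
      ((N : ℝ≥0∞) ^ 2)⁻¹ * ENNReal.ofReal (‖∑ j ∈ univ.erase i, G (X i, X j)‖ ^ 2) := by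
    intro X
    rw [interactionField, norm_smul, mul_pow, ENNReal.ofReal_mul (by positivity), norm_inv,
      Real.norm_natCast, inv_pow, ENNReal.ofReal_inv_of_pos (by positivity),
      ← Nat.cast_pow, ENNReal.ofReal_natCast, Nat.cast_pow]
  have hcard := card_mul_lintegral_norm_sq_le_lintegral_norm_sum_sq hG (notMem_erase i univ)
  rw [card_erase_of_mem (mem_univ i), card_univ, Fintype.card_fin] at hcard
  rw [lintegral_congr hscale, lintegral_const_mul' _ _ (by simp [hN.ne']), div_eq_mul_inv,
    mul_comm _ (_⁻¹), mul_assoc]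
  gcongr

section Invariant

variable {E : Type*} [NormedAddCommGroup E] [InnerProductSpace ℝ E] [MeasurableSpace E]
  [BorelSpace E] {σ : Measure E}

theorem measure_singleton_eq_of_norm_eq (hσ : ∀ O : E ≃ₗᵢ[ℝ] E, σ.map O = σ) {p q : E}
    (hpq : ‖p‖ = ‖q‖) : σ {q} = σ {p} := by
  set O := (ℝ ∙ (p - q))ᗮ.reflection
  have hOp : O p = q := Submodule.reflection_sub hpq
  calc σ {q} = σ.map O {q} := by rw [hσ O]
    _ = σ {p} := by
      rw [Measure.map_apply O.continuous.measurable (measurableSet_singleton q), ← hOp,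
        ← Set.image_singleton, O.injective.preimage_image]

/- All points of the sphere through `p` have the mass of `p`, and only countably many points can
have positive mass; but that sphere is connected, hence uncountable. -/
theorem measure_singleton_eq_zero_of_map_eq (hE : 1 < Module.rank ℝ E) [SFinite σ]
    (hσ : ∀ O : E ≃ₗᵢ[ℝ] E, σ.map O = σ) {p : E} (hp : p ≠ 0) : σ {p} = 0 := by
  by_contra hσp
  have hcount : (Metric.sphere (0 : E) ‖p‖).Countable := by
    refine (Measure.countable_meas_pos_of_disjoint_iUnion (μ := σ)
      (fun q : E => measurableSet_singleton q) ?_).mono fun q hq => ?_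
    · exact fun a b hab => Set.disjoint_singleton.2 hab
    · rw [mem_sphere_zero_iff_norm] at hq
      show 0 < σ {q}
      rw [measure_singleton_eq_of_norm_eq hσ hq.symm]
      exact pos_iff_ne_zero.2 hσp
  have hnontriv : (Metric.sphere (0 : E) ‖p‖).Nontrivial :=
    ⟨p, by simp, -p, by simp, fun h => hp (by simpa [eq_neg_iff_add_eq_zero, ← two_smul ℝ] using h)⟩
  exact hnontriv.not_subsingleton <| hcount.isTotallyDisconnected _ (Set.Subset.refl _)
    (isConnected_sphere hE 0 (norm_nonneg p)).isPreconnected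

end Invariant

section Sphere

variable {n : ℕ}

theorem continuous_sphereDist :
    Continuous fun p : EuclideanSpace ℝ (Fin (n + 1)) × EuclideanSpace ℝ (Fin (n + 1)) =>
      sphereDist p.1 p.2 :=
  Real.continuous_arccos.comp continuous_inner

theorem measurable_sphereW :
    Measurable fun p : EuclideanSpace ℝ (Fin (n + 1)) × EuclideanSpace ℝ (Fin (n + 1)) =>
      sphereW p.1 p.2 := by
  classical
  have hv : Continuous fun p : EuclideanSpace ℝ (Fin (n + 1)) × EuclideanSpace ℝ (Fin (n + 1)) =>
      p.2 - ⟪p.1, p.2⟫ • p.1 := by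
    fun_prop
  refine Measurable.ite ?_ measurable_const
    (continuous_sphereDist.measurable.smul (hv.measurable.norm.inv.smul hv.measurable))
  exact (measurableSet_eq_fun measurable_snd measurable_fst).union
    (measurableSet_eq_fun measurable_snd measurable_fst.neg)

theorem norm_sphereW {x y : EuclideanSpace ℝ (Fin (n + 1))} (hx : ‖x‖ = 1) (hy : ‖y‖ = 1)
    (hxy : y ≠ -x) : ‖sphereW x y‖ = sphereDist x y := by
  classical
  rcases eq_or_ne y x with rfl | hyx
  · simp [sphereW, sphereDist, hy]
  have hv : y - ⟪x, y⟫ • x ≠ 0 := by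
    intro hv
    have hyc : y = ⟪x, y⟫ • x := sub_eq_zero.mp hv
    have habs : |⟪x, y⟫| = 1 := by
      simpa [hx, hy, norm_smul] using congrArg norm hyc.symm
    rcases abs_eq zero_le_one |>.mp habs with h | h
    · exact hyx (by rw [hyc, h, one_smul])
    · exact hxy (by rw [hyc, h, neg_one_smul])
  rw [sphereW, if_neg (not_or.2 ⟨hyx, hxy⟩), norm_smul, norm_smul, norm_inv, norm_norm,
    inv_mul_cancel₀ (norm_ne_zero_iff.mpr hv), mul_one, Real.norm_eq_abs,
    abs_of_nonneg (a := sphereDist x y) (Real.arccos_nonneg _)]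

noncomputable def sphereInteraction (φ : ℝ → ℝ)
    (p : EuclideanSpace ℝ (Fin (n + 1)) × EuclideanSpace ℝ (Fin (n + 1))) :
    EuclideanSpace ℝ (Fin (n + 1)) :=
  φ (sphereDist p.1 p.2) • sphereW p.1 p.2

theorem measurable_sphereInteraction {φ : ℝ → ℝ} (hφ : Measurable φ) :
    Measurable (sphereInteraction (n := n) φ) :=
  (hφ.comp continuous_sphereDist.measurable).smul measurable_sphereW

theorem norm_sphereInteraction_sq (φ : ℝ → ℝ) {x y : EuclideanSpace ℝ (Fin (n + 1))}
    (hx : ‖x‖ = 1) (hy : ‖y‖ = 1) (hxy : y ≠ -x) :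
    ‖sphereInteraction φ (x, y)‖ ^ 2 = φ (sphereDist x y) ^ 2 * sphereDist x y ^ 2 := by
  rw [sphereInteraction, norm_smul, mul_pow, Real.norm_eq_abs, sq_abs, norm_sphereW hx hy hxy]

theorem lintegral_norm_sphereInteraction_sq (φ : ℝ → ℝ)
    {μ₀ : Measure (EuclideanSpace ℝ (Fin (n + 1)))} [SFinite μ₀] [NullSingletonClass μ₀]
    (hunit : ∀ᵐ x ∂μ₀, ‖x‖ = 1) :
    ∫⁻ p, ENNReal.ofReal (‖sphereInteraction φ p‖ ^ 2) ∂(μ₀.prod μ₀) =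
      ∫⁻ p, ENNReal.ofReal (φ (sphereDist p.1 p.2) ^ 2 * sphereDist p.1 p.2 ^ 2)
        ∂(μ₀.prod μ₀) := by
  refine lintegral_congr_ae ?_
  filter_upwards [Measure.quasiMeasurePreserving_fst.ae hunit,
    Measure.quasiMeasurePreserving_snd.ae hunit, ae_prod_snd_ne measurable_neg]
    with p h₁ h₂ h₃
  rw [norm_sphereInteraction_sq φ h₁ h₂ h₃]

theorem nullSingletonClass_of_sphere (hn : 1 ≤ n)
    {σ : Measure (EuclideanSpace ℝ (Fin (n + 1)))} [SFinite σ]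
    (hσsphere : σ (Metric.sphere (0 : EuclideanSpace ℝ (Fin (n + 1))) 1)ᶜ = 0)
    (hσinv : ∀ O : EuclideanSpace ℝ (Fin (n + 1)) ≃ₗᵢ[ℝ] EuclideanSpace ℝ (Fin (n + 1)),
      Measure.map O σ = σ) :
    NullSingletonClass σ := by
  refine ⟨fun q => ?_⟩
  rcases eq_or_ne q 0 with rfl | hq
  · exact measure_mono_null (by simp) hσsphere
  refine measure_singleton_eq_zero_of_map_eq ?_ hσinv hq
  rw [← Module.finrank_eq_rank, finrank_euclideanSpace_fin]
  exact_mod_cast Nat.lt_succ_of_le hn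

theorem sphereRhoSqNorm_of_lt_two {N : ℕ} (hN : N < 2)
    (μ : Measure (Fin N → EuclideanSpace ℝ (Fin (n + 1)))) (φ : ℝ → ℝ) :
    sphereRhoSqNorm n N μ φ = 0 := by
  interval_cases N <;> simp [sphereRhoSqNorm]

theorem sphereRhoSqNorm_pi {N : ℕ} (hN : 2 ≤ N) (μ₀ : Measure (EuclideanSpace ℝ (Fin (n + 1))))
    [IsProbabilityMeasure μ₀] {φ : ℝ → ℝ} (hφ : Measurable φ) :
    sphereRhoSqNorm n N (Measure.pi fun _ => μ₀) φ =
      ∫⁻ p, ENNReal.ofReal (φ (sphereDist p.1 p.2) ^ 2 * sphereDist p.1 p.2 ^ 2)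
        ∂(μ₀.prod μ₀) := by
  have hd := continuous_sphereDist (n := n).measurable
  have hpair : ∀ i : Fin N, ∀ j ∈ univ.erase i,
      ∫⁻ X, ENNReal.ofReal (φ (sphereDist (X i) (X j)) ^ 2 * sphereDist (X i) (X j) ^ 2)
        ∂(Measure.pi fun _ => μ₀) =
      ∫⁻ p, ENNReal.ofReal (φ (sphereDist p.1 p.2) ^ 2 * sphereDist p.1 p.2 ^ 2)
        ∂(μ₀.prod μ₀) :=
    fun i j hj => (measurePreserving_eval_prodMk_eval (ne_of_mem_erase hj).symm).lintegral_comp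
      (((hφ.comp hd).pow_const 2).mul (hd.pow_const 2)).ennreal_ofReal
  have hcard : ((N * (N - 1) : ℕ) : ℝ≥0∞) ≠ 0 :=
    Nat.cast_ne_zero.2 (Nat.mul_ne_zero (by omega) (by omega))
  rw [sphereRhoSqNorm, sum_congr rfl fun i _ => sum_congr rfl (hpair i)]
  simp only [sum_const, card_erase_of_mem (mem_univ _), card_univ, Fintype.card_fin, nsmul_eq_mul]
  rw [← mul_assoc (N : ℝ≥0∞), ← Nat.cast_mul,
    ENNReal.inv_mul_cancel_left hcard (ENNReal.natCast_ne_top _)]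

end Sphere

theorem sphere_coercivity_iid_general
    (n N : ℕ) (hn : 1 ≤ n)
    (σ : Measure (EuclideanSpace ℝ (Fin (n + 1)))) [IsProbabilityMeasure σ]
    (hσsphere : σ (Metric.sphere (0 : EuclideanSpace ℝ (Fin (n + 1))) 1)ᶜ = 0)
    (hσinv : ∀ O : EuclideanSpace ℝ (Fin (n + 1)) ≃ₗᵢ[ℝ] EuclideanSpace ℝ (Fin (n + 1)),
      Measure.map O σ = σ)
    (μ₀ : Measure (EuclideanSpace ℝ (Fin (n + 1)))) [IsProbabilityMeasure μ₀]
    (hμ₀ : μ₀ ≪ σ)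
    (μ : Measure (Fin N → EuclideanSpace ℝ (Fin (n + 1))))
    (hμ : μ = Measure.pi fun _ : Fin N => μ₀)
    (φ : ℝ → ℝ) (hφ : Measurable φ)
    (hρfin : sphereRhoSqNorm n N μ φ ≠ ⊤) :
    sphereFieldSqNorm n N μ φ ≥
      (((N - 1 : ℕ) : ℝ≥0∞) / ((N : ℝ≥0∞) ^ 2)) * sphereRhoSqNorm n N μ φ := by
  subst hμ
  rcases lt_or_ge N 2 with hN | hN
  · simp [sphereRhoSqNorm_of_lt_two hN]
  have := nullSingletonClass_of_sphere hn hσsphere hσinv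
  have : NullSingletonClass μ₀ := ⟨fun q => hμ₀ (measure_singleton q)⟩
  have hunit : ∀ᵐ x ∂μ₀, ‖x‖ = 1 := hμ₀.ae_le <| ae_iff.2 <| by
    simpa [Set.compl_def] using hσsphere
  rw [sphereRhoSqNorm_pi hN μ₀ hφ, ← lintegral_norm_sphereInteraction_sq φ hunit] at hρfin ⊢
  exact le_lintegral_mean_norm_interactionField_sq <|
    memLp_two_of_lintegral_ofReal_norm_sq_ne_top
      (measurable_sphereInteraction hφ).aestronglyMeasurable hρfin

/-- coercivity on the sphere for i.i.d. particles:
`‖f_φ‖²_{L²(μ)} ≥ ((N−1)/N²)‖φ‖²_{L²(ρ)}` when `μ = μ₀^{⊗N}` with `μ₀` absolutely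
continuous with respect to the uniform measure `σ` on `𝕊^n`. -/
theorem sphere_coercivity_iid
    (n N : ℕ) (hn : 1 ≤ n) (hN : 2 ≤ N)
    (σ : Measure (EuclideanSpace ℝ (Fin (n + 1)))) [IsProbabilityMeasure σ]
    (hσsphere : σ (Metric.sphere (0 : EuclideanSpace ℝ (Fin (n + 1))) 1)ᶜ = 0)
    (hσinv : ∀ O : EuclideanSpace ℝ (Fin (n + 1)) ≃ₗᵢ[ℝ] EuclideanSpace ℝ (Fin (n + 1)),
      Measure.map O σ = σ)
    (μ₀ : Measure (EuclideanSpace ℝ (Fin (n + 1)))) [IsProbabilityMeasure μ₀]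
    (hμ₀ : μ₀ ≪ σ)
    (μ : Measure (Fin N → EuclideanSpace ℝ (Fin (n + 1))))
    (hμ : μ = Measure.pi fun _ : Fin N => μ₀)
    (φ : ℝ → ℝ) (hφ : Measurable φ)
    (hρfin : sphereRhoSqNorm n N μ φ ≠ ⊤) :
    sphereFieldSqNorm n N μ φ ≥
      (((N - 1 : ℕ) : ℝ≥0∞) / ((N : ℝ≥0∞) ^ 2)) * sphereRhoSqNorm n N μ φ :=
  sphere_coercivity_iid_general n N hn σ hσsphere hσinv μ₀ hμ₀ μ hμ φ hφ hρfin
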